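/- Let W_α be a bounded unilateral weighted shift with positive weights (α_j)_{j≥0}. If W_α³ is quasinormal, then α_{j+3} = α_j for all j ≥ 0. -/

import Mathlib

/-!
`W_α ^ n` maps `e j` to `β j • e (j + n)` with `β j = α j * ⋯ * α (j + n - 1)`, and testing the
quasinormality of such an operator on `e j` in the coordinates of `ℓ²` gives `β (j + n) = β j`.
Then `α (j + n) / α j = β (j + 1) / β j` is `n`-periodic, so `α` is geometric along each residue
class mod `n`; boundedness of `α` forces `α (j + n) ≤ α j`, and `β (j + n) = β j` excludes a
strict decrease.
-/

noncomputable section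

/-- The standard basis vectors of `ℓ²(ℕ)`. -/
def e (j : ℕ) : lp (fun _ : ℕ => ℂ) 2 := lp.single 2 j 1

open scoped InnerProductSpace
open Finset

def IsQuasinormal {E : Type*} [NormedAddCommGroup E] [InnerProductSpace ℂ E] [CompleteSpace E]
    (T : E →L[ℂ] E) : Prop :=
  T * (star T * T) = star T * T * T

/-- `W_a ^ n` is the weighted shift by `n` with weights `windowProd a n`. -/
def windowProd {M : Type*} [CommMonoid M] (a : ℕ → M) (n j : ℕ) : M :=
  ∏ i ∈ range n, a (j + i)

section windowProd

variable {M : Type*} [CommMonoid M]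

theorem windowProd_succ (a : ℕ → M) (n j : ℕ) :
    windowProd a (n + 1) j = windowProd a n j * a (j + n) :=
  prod_range_succ _ _

theorem windowProd_succ_eq_mul (a : ℕ → M) (n j : ℕ) :
    windowProd a (n + 1) j = windowProd a n (j + 1) * a j := by
  simp only [windowProd, prod_range_succ', add_zero, ← add_assoc, add_right_comm j 1]

theorem windowProd_succ_mul (a : ℕ → M) (n j : ℕ) :
    windowProd a n (j + 1) * a j = windowProd a n j * a (j + n) := by
  rw [← windowProd_succ, windowProd_succ_eq_mul]

theorem windowProd_pos {α : ℕ → ℝ} (hpos : ∀ j, 0 < α j) (n j : ℕ) : 0 < windowProd α n j :=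
  prod_pos fun i _ => hpos (j + i)

end windowProd

theorem le_one_of_bddAbove_pow_mul {a r : ℝ} (ha : 0 < a)
    (hbdd : BddAbove (Set.range fun k : ℕ => r ^ k * a)) : r ≤ 1 := by
  by_contra! hr
  obtain ⟨M, hM⟩ := hbdd
  obtain ⟨k, hk⟩ := pow_unbounded_of_one_lt (M / a) hr
  exact (hM ⟨k, rfl⟩).not_gt ((div_lt_iff₀ ha).mp hk)

section PeriodicWindow

variable {α : ℕ → ℝ} {n : ℕ}

theorem apply_add_le_of_windowProd_periodic (hpos : ∀ j, 0 < α j)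
    (hbdd : BddAbove (Set.range α)) (hper : ∀ j, windowProd α n (j + n) = windowProd α n j)
    (j : ℕ) : α (j + n) ≤ α j := by
  set r : ℕ → ℝ := fun j => windowProd α n (j + 1) / windowProd α n j
  have hstep : ∀ i, α (i + n) = r i * α i := fun i => by
    have := windowProd_succ_mul α n i
    simp only [r]
    field_simp [(windowProd_pos hpos n i).ne']
    linarith
  have hr : ∀ i, r (i + n) = r i := fun i => by
    simp only [r, add_right_comm i n 1, hper]
  have hrk : ∀ k, r (j + n * k) = r j := fun k => by
    induction k with
    | zero => simp
    | succ k ih => rw [mul_add_one, ← add_assoc, hr, ih]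
  have hgeom : ∀ k, α (j + n * k) = r j ^ k * α j := fun k => by
    induction k with
    | zero => simp
    | succ k ih => rw [mul_add_one, ← add_assoc, hstep, hrk, ih, pow_succ]; ring
  have hr_le : r j ≤ 1 := by
    refine le_one_of_bddAbove_pow_mul (hpos j) (hbdd.mono ?_)
    rintro _ ⟨k, rfl⟩
    exact ⟨j + n * k, hgeom k⟩
  calc α (j + n) = r j * α j := hstep j
    _ ≤ 1 * α j := by gcongr; exact (hpos j).le
    _ = α j := one_mul _

theorem periodic_of_windowProd_periodic (hpos : ∀ j, 0 < α j)
    (hbdd : BddAbove (Set.range α)) (hper : ∀ j, windowProd α n (j + n) = windowProd α n j)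
    (j : ℕ) : α (j + n) = α j := by
  rcases n.eq_zero_or_pos with rfl | hn
  · rfl
  refine (apply_add_le_of_windowProd_periodic hpos hbdd hper j).antisymm (not_lt.mp fun hlt => ?_)
  have hle : ∀ i ∈ range n, α (j + n + i) ≤ α (j + i) := fun i _ => by
    rw [add_right_comm]
    exact apply_add_le_of_windowProd_periodic hpos hbdd hper (j + i)
  have := prod_lt_prod (fun i _ => hpos (j + n + i)) hle ⟨0, mem_range.mpr hn, by simpa using hlt⟩
  exact this.ne (hper j)

end PeriodicWindow

section WeightedShift

local notation "ℓ²" => lp (fun _ : ℕ => ℂ) 2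

theorem inner_e_left (x : ℓ²) (k : ℕ) : ⟪e k, x⟫_ℂ = x k := by
  simp [e, lp.inner_single_left]

theorem inner_e_e (j k : ℕ) : ⟪e j, e k⟫_ℂ = if j = k then 1 else 0 := by
  rw [inner_e_left, e, lp.single_apply, Pi.single_apply, eq_comm]

theorem norm_e (j : ℕ) : ‖e j‖ = 1 := by
  simp [e, lp.norm_single (p := 2) (by norm_num)]

theorem e_ne_zero (j : ℕ) : e j ≠ 0 :=
  norm_ne_zero_iff.mp ((norm_e j).symm ▸ one_ne_zero)

theorem star_mul_self_apply_e {T : ℓ² →L[ℂ] ℓ²} {c : ℕ → ℂ} {n : ℕ}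
    (hT : ∀ j, T (e j) = c j • e (j + n)) (j : ℕ) :
    (star T * T) (e j) = (‖c j‖ : ℂ) ^ 2 • e j := by
  ext1
  funext k
  rw [← inner_e_left, ← inner_e_left, mul_apply_eq_comp,
    ContinuousLinearMap.star_eq_adjoint, ContinuousLinearMap.adjoint_inner_right, hT, hT,
    inner_smul_left, inner_smul_right, inner_smul_right, inner_e_e, inner_e_e]
  rcases eq_or_ne k j with rfl | hkj
  · simp [Complex.conj_mul']
  · simp [hkj]

theorem norm_coeff_add_eq_of_isQuasinormal {T : ℓ² →L[ℂ] ℓ²} (hq : IsQuasinormal T)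
    {c : ℕ → ℂ} {n : ℕ} (hT : ∀ j, T (e j) = c j • e (j + n)) {j : ℕ} (hc : c j ≠ 0) :
    ‖c (j + n)‖ = ‖c j‖ := by
  have h := congr($hq (e j))
  simp only [mul_apply_eq_comp, star_mul_self_apply_e hT, map_smul, hT, smul_smul] at h
  have hsq : (‖c (j + n)‖ : ℂ) ^ 2 = (‖c j‖ : ℂ) ^ 2 :=
    mul_left_cancel₀ hc (by linear_combination (smul_left_injective ℂ (e_ne_zero _) h).symm)
  exact (pow_left_inj₀ (norm_nonneg _) (norm_nonneg _) two_ne_zero).mp (by exact_mod_cast hsq)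

variable {W : ℓ² →L[ℂ] ℓ²} {a : ℕ → ℂ}

theorem pow_apply_e_of_shift (hW : ∀ j, W (e j) = a j • e (j + 1)) (n j : ℕ) :
    (W ^ n) (e j) = windowProd a n j • e (j + n) := by
  induction n with
  | zero => simp [windowProd]
  | succ n ih =>
    rw [pow_succ', mul_apply_eq_comp, ih, map_smul, hW, smul_smul, windowProd_succ,
      add_assoc]

theorem norm_weight_le_opNorm (hW : ∀ j, W (e j) = a j • e (j + 1)) (j : ℕ) : ‖a j‖ ≤ ‖W‖ := by
  simpa [hW, norm_smul, norm_e] using W.le_opNorm (e j)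

theorem weights_periodic_of_pow_quasinormal (α : ℕ → ℝ) (hpos : ∀ j, 0 < α j)
    (hW : ∀ j, W (e j) = (α j : ℂ) • e (j + 1)) (n : ℕ) (hq : IsQuasinormal (W ^ n)) (j : ℕ) :
    α (j + n) = α j := by
  have hWn (j : ℕ) : (W ^ n) (e j) = ((windowProd α n j : ℝ) : ℂ) • e (j + n) := by
    rw [pow_apply_e_of_shift hW, windowProd, windowProd, Complex.ofReal_prod]
  have hper (j : ℕ) : windowProd α n (j + n) = windowProd α n j := by
    have hc : ((windowProd α n j : ℝ) : ℂ) ≠ 0 :=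
      Complex.ofReal_ne_zero.mpr (windowProd_pos hpos n j).ne'
    simpa [abs_of_pos (windowProd_pos hpos _ _)] using norm_coeff_add_eq_of_isQuasinormal hq hWn hc
  have hbdd : BddAbove (Set.range α) := ⟨‖W‖, by
    rintro _ ⟨j, rfl⟩
    simpa [abs_of_pos (hpos j)] using norm_weight_le_opNorm hW j⟩
  exact periodic_of_windowProd_periodic hpos hbdd hper j

end WeightedShift

/-- If `W_α` is a bounded unilateral weighted shift with positive weights and `W_α³` is
quasinormal, then the weight sequence is periodic with period at most 3. -/
theorem weights_periodic_of_cube_quasinormal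
    (α : ℕ → ℝ) (hpos : ∀ j, 0 < α j)
    (W : lp (fun _ : ℕ => ℂ) 2 →L[ℂ] lp (fun _ : ℕ => ℂ) 2)
    (hW : ∀ j : ℕ, W (e j) = (α j : ℂ) • e (j + 1))
    (hq : W ^ 3 * (star (W ^ 3) * W ^ 3) = (star (W ^ 3) * W ^ 3) * W ^ 3) :
    ∀ j : ℕ, α (j + 3) = α j :=
  weights_periodic_of_pow_quasinormal α hpos hW 3 hq
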